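/- If Γ ⊂ ℙ^r_k is a nondegenerate finite Gorenstein scheme of degree 2r+2 over an algebraically closed field к, then the homogeneous coordinate ring S_Γ is Gorenstein if and only if Γ is self-associated and fails by exactly 1 to impose independent conditions on quadrics. -/

import Mathlib

/-!
# Gorenstein coordinate ring ⟺ self-associated and failing by 1 on quadrics
(Eisenbud–Popescu, Theorem 7.3)

We model the finite scheme `Γ ⊂ ℙʳ_k` over the algebraically closed field `k` by its
coordinate algebra `A = H⁰(O_Γ)` (finite-dimensional, with Gorenstein local rings — `Γ`,
being of the kind considered in the paper, is assumed locally Gorenstein so that the Gale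
machinery applies), together with the restrictions `x : Fin (r+1) → A` of the ambient
coordinates, `O_Γ(1)` being trivialized.  `Γ` is *nondegenerate* iff the `x i` are linearly
independent, and closed in `ℙʳ` iff the span `Uᵈ` of the degree-`d` monomials in the `x i`
is all of `A` for large `d`.

By Serre duality, `H⁰(K_Γ(e)) = Dual k A` with Serre pairing given by evaluation; graded
local duality identifies the degree-`m` piece of the canonical module `ω_Γ` with
`(U^{-m})^⊥ ⊆ Dual k A`.  The homogeneous coordinate ring `S_Γ` (automatically
Cohen–Macaulay, as `Γ` is finite and the ideal saturated) is Gorenstein iff there is an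
isomorphism of graded modules `S_Γ(a) ≅ ω_Γ`, i.e. iff there is `Φ : Dual k A` with
`f ↦ Φ∘(f·–)` bijective and carrying `U^{m+a}` onto `(ω_Γ)_m` for all `m`
(`IsArithGorenstein` below).

`Γ` (of degree `2r+2`, embedded by the series `V = U¹ = span (x i)`) is *self-associated*
iff there is an isomorphism of `O_Γ`-modules `O_Γ(1) ≅ K_Γ(-1)` — necessarily `f ↦ Φ∘(f·–)`
with `galeMap Φ` bijective — carrying `V` into `V^⊥`, i.e. with `Φ` vanishing on `V·V`.

`Γ` *fails by `c` to impose independent conditions on quadrics* iff the restriction map from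
degree-2 forms to `H⁰(O_Γ(2)) = A`, whose image is `U²`, has cokernel of dimension `c`.
-/

open Module Submodule

variable (k A : Type) [Field k] [CommRing A] [Algebra k A]

/-- The span `Uᵈ ⊆ A = H⁰(O_Γ(d))` of the restrictions to `Γ` of the degree-`d` forms. -/
def degForms (n : ℕ) (x : Fin n → A) (d : ℕ) : Submodule k A :=
  Submodule.span k {a | ∃ m : Fin n → ℕ, (∑ i, m i) = d ∧ a = ∏ i, x i ^ m i}

/-- `Uᵈ` for `d : ℤ`, with `Uᵈ = 0` in negative degrees. -/
def degFormsZ (n : ℕ) (x : Fin n → A) (d : ℤ) : Submodule k A :=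
  if 0 ≤ d then degForms k A n x d.toNat else ⊥

/-- The degree-`m` graded piece of the canonical module `ω_Γ`: `(ω_Γ)_m = (U^{-m})^⊥`. -/
def omegaPiece (n : ℕ) (x : Fin n → A) (m : ℤ) : Submodule k (Module.Dual k A) :=
  (degFormsZ k A n x (-m)).dualAnnihilator

/-- The `k`-linear map `A → Dual k A`, `f ↦ Φ ∘ (f * ·)`. -/
def galeMap (Φ : Module.Dual k A) : A →ₗ[k] Module.Dual k A where
  toFun a := Φ.comp (LinearMap.mulLeft k a)
  map_add' a b := by ext y; simp [add_mul]
  map_smul' c a := by ext y; simp [smul_mul_assoc]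

/-- The homogeneous coordinate ring `S_Γ` is Gorenstein: there is an isomorphism of graded
modules `S_Γ(a) ≅ ω_Γ` for some `a`. -/
def IsArithGorenstein (n : ℕ) (x : Fin n → A) : Prop :=
  ∃ (a : ℤ) (Φ : Module.Dual k A), Function.Bijective (galeMap k A Φ) ∧
    ∀ m : ℤ, Submodule.map (galeMap k A Φ) (degFormsZ k A n x (m + a)) = omegaPiece k A n x m

/-- `Γ` is *self-associated*: there is an isomorphism of `O_Γ`-modules `O_Γ(1) ≅ K_Γ(-1)`
carrying the embedding series `V = span (x i)` into its annihilator `V^⊥`. -/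
def IsSelfAssociated (n : ℕ) (x : Fin n → A) : Prop :=
  ∃ Φ : Module.Dual k A, Function.Bijective (galeMap k A Φ) ∧
    ∀ v ∈ degForms k A n x 1, ∀ w ∈ degForms k A n x 1, Φ (v * w) = 0

section AuxEP

variable {n : ℕ}

lemma sum_pi_single_one (i : Fin n) : (∑ j, (Pi.single i 1 : Fin n → ℕ) j) = 1 := by
  classical
  simp

lemma prod_pow_pi_single_one (x : Fin n → A) (i : Fin n) :
    (∏ j, x j ^ Pi.single i 1 j) = x i := by
  classical
  rw [Finset.prod_eq_single i]
  · simp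
  · intro j _ hj; simp [Pi.single_eq_of_ne hj]
  · simp

lemma degForms_factor (x : Fin n → A) {d : ℕ} (m : Fin n → ℕ) (hm : (∑ i, m i) = d + 1) :
    ∃ (i : Fin n) (m' : Fin n → ℕ),
      (∑ j, m' j) = d ∧ (∏ j, x j ^ m j) = x i * ∏ j, x j ^ m' j := by
  classical
  obtain ⟨i, -, hi⟩ : ∃ i ∈ Finset.univ, m i ≠ 0 :=
    Finset.exists_ne_zero_of_sum_ne_zero (by omega)
  refine ⟨i, Function.update m i (m i - 1), ?_, ?_⟩
  · have h1 := Finset.add_sum_erase Finset.univ (Function.update m i (m i - 1))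
      (Finset.mem_univ i)
    have h2 := Finset.add_sum_erase Finset.univ m (Finset.mem_univ i)
    have h3 : ∑ j ∈ Finset.univ.erase i, Function.update m i (m i - 1) j
        = ∑ j ∈ Finset.univ.erase i, m j :=
      Finset.sum_congr rfl fun j hj => Function.update_of_ne (Finset.ne_of_mem_erase hj) _ _
    rw [Function.update_self] at h1
    omega
  · have h1 : x i ^ m i * ∏ j ∈ Finset.univ.erase i, x j ^ m j = ∏ j, x j ^ m j :=
      Finset.mul_prod_erase Finset.univ (fun j => x j ^ m j) (Finset.mem_univ i)
    have h2 : x i ^ (m i - 1)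
          * ∏ j ∈ Finset.univ.erase i, x j ^ Function.update m i (m i - 1) j
        = ∏ j, x j ^ Function.update m i (m i - 1) j := by
      have := Finset.mul_prod_erase Finset.univ
        (fun j => x j ^ Function.update m i (m i - 1) j) (Finset.mem_univ i)
      simpa using this
    have h3 : ∏ j ∈ Finset.univ.erase i, x j ^ Function.update m i (m i - 1) j
        = ∏ j ∈ Finset.univ.erase i, x j ^ m j :=
      Finset.prod_congr rfl fun j hj => by
        rw [Function.update_of_ne (Finset.ne_of_mem_erase hj)]
    have hmi : m i - 1 + 1 = m i := by omega
    rw [← h1, ← h2, h3, ← mul_assoc, ← pow_succ', hmi]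

lemma degForms_succ (x : Fin n → A) (d : ℕ) :
    degForms k A n x (d + 1) = degForms k A n x 1 * degForms k A n x d := by
  unfold degForms
  rw [Submodule.span_mul_span]
  apply le_antisymm
  · apply Submodule.span_le.mpr
    rintro a ⟨m, hm, rfl⟩
    obtain ⟨i, m', hm', heq⟩ := degForms_factor A x m hm
    rw [heq]
    exact Submodule.subset_span
      (Set.mul_mem_mul ⟨Pi.single i 1, sum_pi_single_one i, (prod_pow_pi_single_one A x i).symm⟩
        ⟨m', hm', rfl⟩)
  · apply Submodule.span_le.mpr
    rintro a ha
    obtain ⟨u, ⟨m1, hm1, rfl⟩, v, ⟨m2, hm2, rfl⟩, rfl⟩ := Set.mem_mul.mp ha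
    refine Submodule.subset_span ⟨m1 + m2, ?_, ?_⟩
    · simp only [Pi.add_apply, Finset.sum_add_distrib]
      omega
    · simp only [Pi.add_apply, pow_add, Finset.prod_mul_distrib]

lemma degForms_zero (x : Fin n → A) : degForms k A n x 0 = Submodule.span k {1} := by
  unfold degForms
  congr 1
  ext a
  simp only [Set.mem_setOf_eq, Set.mem_singleton_iff]
  constructor
  · rintro ⟨m, hm, rfl⟩
    have hz : ∀ j ∈ Finset.univ, m j = 0 := fun j hj => (Finset.sum_eq_zero_iff.mp hm) j hj
    rw [Finset.prod_congr rfl fun j hj => by rw [hz j hj, pow_zero]]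
    exact Finset.prod_const_one
  · rintro rfl
    exact ⟨fun _ => 0, by simp, by simp⟩

lemma degForms_one (x : Fin n → A) :
    degForms k A n x 1 = Submodule.span k (Set.range x) := by
  unfold degForms
  congr 1
  ext a
  simp only [Set.mem_setOf_eq, Set.mem_range]
  constructor
  · rintro ⟨m, hm, rfl⟩
    classical
    obtain ⟨i, -, hi⟩ : ∃ i ∈ Finset.univ, m i ≠ 0 :=
      Finset.exists_ne_zero_of_sum_ne_zero (by omega)
    have h2 := Finset.add_sum_erase Finset.univ m (Finset.mem_univ i)
    have hmi : m i = 1 := by omega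
    have hz : ∀ j ∈ Finset.univ.erase i, m j = 0 := Finset.sum_eq_zero_iff.mp (by omega)
    refine ⟨i, ?_⟩
    have hsplit : (∏ j, x j ^ m j) = x i ^ m i * ∏ j ∈ Finset.univ.erase i, x j ^ m j :=
      (Finset.mul_prod_erase _ _ (Finset.mem_univ i)).symm
    rw [hsplit, hmi, pow_one,
      Finset.prod_congr rfl fun j hj => by rw [hz j hj, pow_zero],
      Finset.prod_const_one, mul_one]
  · rintro ⟨i, rfl⟩
    exact ⟨Pi.single i 1, sum_pi_single_one i, (prod_pow_pi_single_one A x i).symm⟩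

lemma map_mulLeft_mul (ℓ : A) (P Q : Submodule k A) :
    Submodule.map (LinearMap.mulLeft k ℓ) (P * Q)
      = P * Submodule.map (LinearMap.mulLeft k ℓ) Q := by
  apply le_antisymm
  · rw [Submodule.map_le_iff_le_comap]
    refine Submodule.mul_le.mpr fun p hp q hq => ?_
    refine Submodule.mem_comap.mpr ?_
    have h : LinearMap.mulLeft k ℓ (p * q) = p * (ℓ * q) := by
      rw [LinearMap.mulLeft_apply]; ring
    rw [h]
    exact Submodule.mul_mem_mul hp ⟨q, hq, rfl⟩
  · refine Submodule.mul_le.mpr ?_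
    rintro p hp _ ⟨q, hq, rfl⟩
    have h : p * LinearMap.mulLeft k ℓ q = LinearMap.mulLeft k ℓ (p * q) := by
      rw [LinearMap.mulLeft_apply, LinearMap.mulLeft_apply]; ring
    rw [h]
    exact Submodule.mem_map_of_mem (Submodule.mul_mem_mul hp hq)

lemma degFormsZ_coe (x : Fin n → A) (d : ℕ) :
    degFormsZ k A n x (d : ℤ) = degForms k A n x d := by
  unfold degFormsZ
  rw [if_pos (Int.natCast_nonneg d)]
  simp

lemma degFormsZ_neg (x : Fin n → A) {d : ℤ} (hd : d < 0) : degFormsZ k A n x d = ⊥ :=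
  if_neg (not_le.mpr hd)

variable [FiniteDimensional k A]

lemma finrank_dualAnnihilator_add (W : Submodule k A) :
    Module.finrank k W + Module.finrank k W.dualAnnihilator = Module.finrank k A := by
  have e : Module.finrank k (A ⧸ W) = Module.finrank k W.dualAnnihilator :=
    LinearEquiv.finrank_eq (Subspace.quotEquivAnnihilator W)
  have h := Submodule.finrank_quotient_add_finrank W
  omega

lemma finrank_degForms_le (x : Fin n → A) {ℓ : A} (hℓ : ℓ ∈ degForms k A n x 1)
    (hu : Function.Injective (LinearMap.mulLeft k ℓ)) (d : ℕ) :
    Module.finrank k (degForms k A n x d) ≤ Module.finrank k (degForms k A n x (d + 1)) := by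
  have hle : Submodule.map (LinearMap.mulLeft k ℓ) (degForms k A n x d)
      ≤ degForms k A n x (d + 1) := by
    rw [degForms_succ k A x d]
    rintro _ ⟨v, hv, rfl⟩
    exact Submodule.mul_mem_mul hℓ hv
  calc Module.finrank k (degForms k A n x d)
      = Module.finrank k (Submodule.map (LinearMap.mulLeft k ℓ) (degForms k A n x d)) :=
        (Submodule.equivMapOfInjective _ hu _).finrank_eq
    _ ≤ _ := Submodule.finrank_mono hle

lemma degForms_stab (x : Fin n → A) {ℓ : A} (hℓ : ℓ ∈ degForms k A n x 1)
    (hu : Function.Injective (LinearMap.mulLeft k ℓ))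
    (hclosed : ∃ N : ℕ, ∀ d ≥ N, degForms k A n x d = ⊤) (d : ℕ)
    (h : Module.finrank k (degForms k A n x (d + 1)) ≤ Module.finrank k (degForms k A n x d)) :
    degForms k A n x d = ⊤ := by
  have hbase : Submodule.map (LinearMap.mulLeft k ℓ) (degForms k A n x d)
      = degForms k A n x (d + 1) := by
    have hle : Submodule.map (LinearMap.mulLeft k ℓ) (degForms k A n x d)
        ≤ degForms k A n x (d + 1) := by
      rw [degForms_succ k A x d]
      rintro _ ⟨v, hv, rfl⟩
      exact Submodule.mul_mem_mul hℓ hv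
    refine Submodule.eq_of_le_of_finrank_le hle ?_
    exact le_trans h (le_of_eq (Submodule.equivMapOfInjective _ hu _).finrank_eq)
  have hstep : ∀ e : ℕ, Submodule.map (LinearMap.mulLeft k ℓ) (degForms k A n x (d + e))
      = degForms k A n x (d + e + 1) := by
    intro e
    induction e with
    | zero => exact hbase
    | succ e ih =>
      have h1 : degForms k A n x (d + (e + 1))
          = degForms k A n x 1 * degForms k A n x (d + e) := degForms_succ k A x (d + e)
      have h2 : degForms k A n x (d + (e + 1) + 1)
          = degForms k A n x 1 * degForms k A n x (d + e + 1) := degForms_succ k A x (d + e + 1)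
      rw [h1, h2, ← ih, ← map_mulLeft_mul]
  have hconst : ∀ e : ℕ,
      Module.finrank k (degForms k A n x (d + e)) = Module.finrank k (degForms k A n x d) := by
    intro e
    induction e with
    | zero => rfl
    | succ e ih =>
      have he := (Submodule.equivMapOfInjective _ hu (degForms k A n x (d + e))).finrank_eq
      rw [hstep e] at he
      rw [show d + (e + 1) = d + e + 1 from rfl, ← he, ih]
  obtain ⟨N, hN⟩ := hclosed
  apply Submodule.eq_top_of_finrank_eq
  have hc := hconst N
  rw [hN (d + N) (by omega)] at hc
  rw [← hc, finrank_top]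

lemma degForms_strict (x : Fin n → A) {ℓ : A} (hℓ : ℓ ∈ degForms k A n x 1)
    (hu : Function.Injective (LinearMap.mulLeft k ℓ))
    (hclosed : ∃ N : ℕ, ∀ d ≥ N, degForms k A n x d = ⊤) {d1 d2 : ℕ} (h12 : d1 ≤ d2)
    (heq : Module.finrank k (degForms k A n x d1) = Module.finrank k (degForms k A n x d2))
    (hne : degForms k A n x d1 ≠ ⊤) : d1 = d2 := by
  rcases eq_or_lt_of_le h12 with h | h
  · exact h
  · exfalso
    apply hne
    apply degForms_stab k A x hℓ hu hclosed d1
    have hmono : Monotone fun d => Module.finrank k (degForms k A n x d) :=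
      monotone_nat_of_le_succ (finrank_degForms_le k A x hℓ hu)
    have h2 := hmono (show d1 + 1 ≤ d2 by omega)
    simp only at h2
    omega

lemma exists_unit_degForms_one [Infinite k] (x : Fin n → A)
    (hclosed : ∃ N : ℕ, ∀ d ≥ N, degForms k A n x d = ⊤) :
    ∃ ℓ ∈ degForms k A n x 1, IsUnit ℓ := by
  classical
  haveI : IsArtinian k A := isArtinian_of_fg_of_artinian'
  haveI : IsArtinianRing A := isArtinian_of_tower k inferInstance
  haveI : Finite {I : Ideal A | I.IsMaximal} :=
    (IsArtinianRing.setOfPred_isMaximal_finite A).to_subtype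
  by_contra hno
  push_neg at hno
  have hnotle : ∀ I : Ideal A, I.IsMaximal →
      ¬ (degForms k A n x 1 ≤ I.restrictScalars k) := by
    intro I hI hle
    have key : ∀ d : ℕ, degForms k A n x (d + 1) ≤ I.restrictScalars k := by
      intro d
      induction d with
      | zero => exact hle
      | succ d ih =>
        rw [degForms_succ k A x (d + 1)]
        refine Submodule.mul_le.mpr fun u hu v hv => ?_
        exact I.mul_mem_right v (hle hu)
    obtain ⟨N, hN⟩ := hclosed
    have htop := key N
    rw [hN (N + 1) (by omega)] at htop
    exact hI.ne_top ((Ideal.eq_top_iff_one I).mpr (htop trivial))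
  have hcover : ⋃ I : {I : Ideal A | I.IsMaximal},
      ((Submodule.comap (degForms k A n x 1).subtype (I.1.restrictScalars k)) :
        Set (degForms k A n x 1)) = Set.univ := by
    apply Set.eq_univ_iff_forall.mpr
    intro v
    obtain ⟨I, hI, hvI⟩ := exists_max_ideal_of_mem_nonunits (hno v.1 v.2)
    exact Set.mem_iUnion.mpr ⟨⟨I, hI⟩, Submodule.mem_comap.mpr hvI⟩
  obtain ⟨I, hI⟩ := Subspace.exists_eq_top_of_iUnion_eq_univ hcover
  exact hnotle I.1 I.2 (Submodule.comap_subtype_eq_top.mp hI)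

end AuxEP

/-- **Eisenbud–Popescu, Theorem 7.3.**  If `Γ ⊂ ℙʳ_k` is a nondegenerate finite scheme of
degree `2r+2` over an algebraically closed field `k`, then its homogeneous coordinate ring
`S_Γ` is Gorenstein if and only if `Γ` is self-associated and fails by exactly `1` to impose
independent conditions on quadrics. -/
theorem gorenstein_iff_self_associated_and_quadric_failure_one
    [IsAlgClosed k] [FiniteDimensional k A]
    -- `Γ = Spec A` is (locally) Gorenstein:
    (hGor : ∃ φ₀ : Module.Dual k A, ∀ ψ : Module.Dual k A, ∃ a : A, ∀ y : A, ψ y = φ₀ (a * y))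
    (r : ℕ) (x : Fin (r + 1) → A)
    (hdeg : Module.finrank k A = 2 * r + 2)
    -- `Γ` is nondegenerate in `ℙʳ`:
    (hnd : LinearIndependent k x)
    -- `Γ` is a closed subscheme of `ℙʳ`:
    (hclosed : ∃ N : ℕ, ∀ d ≥ N, degForms k A (r + 1) x d = ⊤) :
    IsArithGorenstein k A (r + 1) x ↔
      (IsSelfAssociated k A (r + 1) x ∧
        Module.finrank k ↥(degForms k A (r + 1) x 2) + 1 = Module.finrank k A) := by
  classical
  obtain ⟨ℓ, hℓ, hu⟩ := exists_unit_degForms_one k A x hclosed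
  have hinjℓ : Function.Injective (LinearMap.mulLeft k ℓ) := fun a b hab => by
    have : ℓ * a = ℓ * b := hab
    exact hu.mul_right_injective this
  have hA : Nontrivial A := by
    rcases subsingleton_or_nontrivial A with h | h
    · exfalso
      have h0 : Module.finrank k A = 0 := Module.finrank_zero_of_subsingleton
      omega
    · exact h
  have hfr0 : Module.finrank k (degForms k A (r + 1) x 0) = 1 := by
    rw [degForms_zero k A x]
    exact finrank_span_singleton one_ne_zero
  have hfr1 : Module.finrank k (degForms k A (r + 1) x 1) = r + 1 := by
    rw [degForms_one k A x, finrank_span_eq_card hnd, Fintype.card_fin]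
  have hlesucc := finrank_degForms_le k A x hℓ hinjℓ
  have hnetop : ∀ d : ℕ, Module.finrank k (degForms k A (r + 1) x d) ≠ 2 * r + 2 →
      degForms k A (r + 1) x d ≠ ⊤ := by
    intro d hd h
    apply hd
    rw [h, finrank_top, hdeg]
  constructor
  · rintro ⟨a, Φ, ⟨hinj, hsurj⟩, hmap⟩
    have hrel : ∀ m : ℤ, Module.finrank k (degFormsZ k A (r + 1) x (m + a))
        + Module.finrank k (degFormsZ k A (r + 1) x (-m)) = 2 * r + 2 := by
      intro m
      have h1 : Module.finrank k
            (Submodule.map (galeMap k A Φ) (degFormsZ k A (r + 1) x (m + a)))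
          = Module.finrank k (degFormsZ k A (r + 1) x (m + a)) :=
        ((Submodule.equivMapOfInjective _ hinj _).finrank_eq).symm
      rw [hmap m] at h1
      unfold omegaPiece at h1
      have h3 := finrank_dualAnnihilator_add k A (degFormsZ k A (r + 1) x (-m))
      rw [hdeg] at h3
      omega
    have h1 := hrel (-1)
    rw [show (-(-1) : ℤ) = ((1 : ℕ) : ℤ) by norm_num, degFormsZ_coe k A x 1, hfr1] at h1
    have hapos : (0 : ℤ) ≤ -1 + a := by
      by_contra hneg
      push_neg at hneg
      rw [degFormsZ_neg k A x hneg] at h1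
      simp at h1
      omega
    have htofn := Int.toNat_of_nonneg hapos
    rw [← htofn, degFormsZ_coe k A x ((-1 + a).toNat)] at h1
    have hUtne : degForms k A (r + 1) x ((-1 + a).toNat) ≠ ⊤ := hnetop _ (by omega)
    have hU1ne : degForms k A (r + 1) x 1 ≠ ⊤ := hnetop _ (by omega)
    have ht : (-1 + a).toNat = 1 := by
      rcases le_total ((-1 + a).toNat) 1 with hle | hle
      · exact degForms_strict k A x hℓ hinjℓ hclosed hle (by omega) hUtne
      · exact (degForms_strict k A x hℓ hinjℓ hclosed hle (by omega) hU1ne).symm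
    have ha : a = 2 := by omega
    subst ha
    constructor
    · refine ⟨Φ, ⟨hinj, hsurj⟩, ?_⟩
      intro v hv w hw
      have hm := hmap (-1)
      rw [show (-1 + 2 : ℤ) = ((1 : ℕ) : ℤ) by norm_num, degFormsZ_coe k A x 1] at hm
      have hmem : galeMap k A Φ v ∈ omegaPiece k A (r + 1) x (-1) :=
        hm ▸ Submodule.mem_map_of_mem hv
      unfold omegaPiece at hmem
      rw [show (-(-1) : ℤ) = ((1 : ℕ) : ℤ) by norm_num, degFormsZ_coe k A x 1] at hmem
      rw [Submodule.mem_dualAnnihilator] at hmem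
      exact hmem w hw
    · have h0 := hrel 0
      rw [show ((0 : ℤ) + 2) = ((2 : ℕ) : ℤ) by norm_num, degFormsZ_coe k A x 2,
        show (-(0 : ℤ)) = ((0 : ℕ) : ℤ) by norm_num, degFormsZ_coe k A x 0, hfr0] at h0
      rw [hdeg]
      omega
  · rintro ⟨⟨Φ, ⟨hinj, hsurj⟩, hvan⟩, hq⟩
    refine ⟨2, Φ, ⟨hinj, hsurj⟩, ?_⟩
    have hker : degForms k A (r + 1) x 2 ≤ LinearMap.ker Φ := by
      rw [show (2 : ℕ) = 1 + 1 from rfl, degForms_succ k A x 1]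
      exact Submodule.mul_le.mpr fun v hv w hw => LinearMap.mem_ker.mpr (hvan v hv w hw)
    have hfr2 : Module.finrank k (degForms k A (r + 1) x 2) = 2 * r + 1 := by
      rw [hdeg] at hq
      omega
    have hU3 : degForms k A (r + 1) x 3 = ⊤ := by
      have hle23 : Module.finrank k (degForms k A (r + 1) x 2)
          ≤ Module.finrank k (degForms k A (r + 1) x 3) := hlesucc 2
      rcases eq_or_lt_of_le hle23 with h | h
      · exfalso
        have htop := degForms_stab k A x hℓ hinjℓ hclosed 2 (le_of_eq h.symm)
        exact hnetop 2 (by omega) htop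
      · apply Submodule.eq_top_of_finrank_eq
        have hle3 : Module.finrank k (degForms k A (r + 1) x 3) ≤ Module.finrank k A :=
          Submodule.finrank_le _
        rw [hdeg] at hle3 ⊢
        omega
    have hUtop : ∀ d : ℕ, 3 ≤ d → degForms k A (r + 1) x d = ⊤ := by
      intro d hd
      induction d with
      | zero => omega
      | succ d ih =>
        rcases Nat.lt_or_ge d 3 with h | h
        · have hd2 : d = 2 := by omega
          subst hd2
          exact hU3
        · have htop := ih (by omega)
          apply Submodule.eq_top_of_finrank_eq
          have h1 := hlesucc d
          rw [htop, finrank_top] at h1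
          have h2 : Module.finrank k (degForms k A (r + 1) x (d + 1)) ≤ Module.finrank k A :=
            Submodule.finrank_le _
          omega
    have hmapfr : ∀ W : Submodule k A,
        Module.finrank k (Submodule.map (galeMap k A Φ) W) = Module.finrank k W :=
      fun W => ((Submodule.equivMapOfInjective _ hinj W).finrank_eq).symm
    intro m
    unfold omegaPiece
    rcases le_or_gt 1 m with hm1 | hm1
    · rw [show (m + 2 : ℤ) = (((m + 2).toNat : ℕ) : ℤ) from (Int.toNat_of_nonneg (by omega)).symm,
        degFormsZ_coe k A x, hUtop (m + 2).toNat (by omega), Submodule.map_top,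
        LinearMap.range_eq_top.mpr hsurj,
        degFormsZ_neg k A x (show -m < 0 by omega), Submodule.dualAnnihilator_bot]
    rcases le_or_gt m (-3) with hm3 | hm3
    · rw [degFormsZ_neg k A x (show m + 2 < 0 by omega), Submodule.map_bot,
        show (-m : ℤ) = (((-m).toNat : ℕ) : ℤ) from (Int.toNat_of_nonneg (by omega)).symm,
        degFormsZ_coe k A x, hUtop (-m).toNat (by omega), Submodule.dualAnnihilator_top]
    have hannfr := fun (d : ℕ) => finrank_dualAnnihilator_add k A (degForms k A (r + 1) x d)
    have hcases : m = -2 ∨ m = -1 ∨ m = 0 := by omega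
    rcases hcases with rfl | rfl | rfl
    · rw [show (-2 + 2 : ℤ) = ((0 : ℕ) : ℤ) by norm_num, degFormsZ_coe k A x,
        show (-(-2) : ℤ) = ((2 : ℕ) : ℤ) by norm_num, degFormsZ_coe k A x]
      apply Submodule.eq_of_le_of_finrank_le
      · rintro _ ⟨v, hv, rfl⟩
        rw [Submodule.mem_dualAnnihilator]
        intro w hw
        rw [degForms_zero k A x] at hv
        obtain ⟨c, rfl⟩ := Submodule.mem_span_singleton.mp hv
        show Φ ((c • (1 : A)) * w) = 0
        rw [smul_mul_assoc, one_mul, map_smul, LinearMap.mem_ker.mp (hker hw), smul_zero]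
      · have hh := hannfr 2
        rw [hdeg] at hh
        rw [hmapfr]
        omega
    · rw [show (-1 + 2 : ℤ) = ((1 : ℕ) : ℤ) by norm_num, degFormsZ_coe k A x,
        show (-(-1) : ℤ) = ((1 : ℕ) : ℤ) by norm_num, degFormsZ_coe k A x]
      apply Submodule.eq_of_le_of_finrank_le
      · rintro _ ⟨v, hv, rfl⟩
        rw [Submodule.mem_dualAnnihilator]
        intro w hw
        exact hvan v hv w hw
      · have hh := hannfr 1
        rw [hdeg] at hh
        rw [hmapfr]
        omega
    · rw [show ((0 : ℤ) + 2) = ((2 : ℕ) : ℤ) by norm_num, degFormsZ_coe k A x,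
        show (-(0 : ℤ)) = ((0 : ℕ) : ℤ) by norm_num, degFormsZ_coe k A x]
      apply Submodule.eq_of_le_of_finrank_le
      · rintro _ ⟨v, hv, rfl⟩
        rw [Submodule.mem_dualAnnihilator]
        intro w hw
        rw [degForms_zero k A x] at hw
        obtain ⟨c, rfl⟩ := Submodule.mem_span_singleton.mp hw
        show Φ (v * (c • (1 : A))) = 0
        rw [mul_smul_comm, mul_one, map_smul, LinearMap.mem_ker.mp (hker hv), smul_zero]
      · have hh := hannfr 0
        rw [hdeg] at hh
        rw [hmapfr]
        omega
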